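/- Growth of the (A,N) orbital integral: Let f : GL₂(ℂ) → ℂ be continuous and compactly supported. Then for every real ε > 0 there exist constants C, r > 0 such that |M(x, c, f)| ≤ C |x|^{−ε} for all x, c ∈ ℂ ∖ {0} with 0 < |x| ≤ r. -/

import Mathlib

open MeasureTheory Filter Topology Complex
open scoped ENNReal


/-- The multiplicative Haar measure `d×a = dA(a)/|a|²` on `ℂ ∖ {0}`. -/
noncomputable def mulHaar : Measure ℂ :=
  volume.withDensity fun a => ENNReal.ofReal ((‖a‖ ^ 2)⁻¹)

/-- `n(x) = [[1, x], [0, 1]]`. -/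
def nMat (x : ℂ) : Matrix (Fin 2) (Fin 2) ℂ := !![1, x; 0, 1]

/-- `z(c) = [[c, 0], [0, c]]`. -/
def zMat (c : ℂ) : Matrix (Fin 2) (Fin 2) ℂ := !![c, 0; 0, c]

/-- `s(a) = [[a, 0], [0, 1/a]]`. -/
noncomputable def sMat (a : ℂ) : Matrix (Fin 2) (Fin 2) ℂ := !![a, 0; 0, a⁻¹]

/-- `w₀ = [[0, 1], [1, 0]]`. -/
def w0Mat : Matrix (Fin 2) (Fin 2) ℂ := !![0, 1; 1, 0]

/-- The `(A,N)` orbital integral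
`M(x, c, f) = ∫_{ℂ∖{0}} ∫_ℂ f(s(a) z(c) n(x) w₀ n(y)) dA(y) d×a`. -/
noncomputable def Morb (f : Matrix (Fin 2) (Fin 2) ℂ → ℂ) (x c : ℂ) : ℂ :=
  ∫ a in {(0 : ℂ)}ᶜ, (∫ y : ℂ, f (sMat a * zMat c * nMat x * w0Mat * nMat y)) ∂mulHaar

/-!
Write `g(a, y) = s(a) z(c) n(x) w₀ n(y) = [[acx, acx (y + x⁻¹)], [c/a, cy/a]]`, a matrix of
determinant `-c²`. On the support of `f` all entries are bounded by `R` and `|det| ≥ δ²`, so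
`|c| ≥ δ`, and the entries `acx` and `c/a` confine `a` to the annulus `δ/R ≤ |a| ≤ R/(δ|x|)`,
whose `d×a`-measure is `2π log (R²/(δ²|x|))`. The two other entries confine `y` to the discs
`|y| ≤ ρ₁` and `|y + x⁻¹| ≤ ρ₂` with `ρ₁ρ₂ = R²/(|c|²|x|)`. These discs meet and their centres
are `|x|⁻¹` apart, so the smaller one has radius at most `2ρ₁ρ₂|x| ≤ 2R²/δ²`: the inner integral
is bounded uniformly in `a`, `c` and `x`. Finally `log u ≤ u^ε / ε`.
-/

open Metric Set

theorem norm_integral_le_of_support_subset {X E : Type*} [MeasurableSpace X]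
    [NormedAddCommGroup E] [NormedSpace ℝ E] {μ : Measure X} {h : X → E} {s : Set X} {M : ℝ}
    (hs : μ s < ∞) (hsupp : Function.support h ⊆ s) (hM : ∀ x, ‖h x‖ ≤ M) :
    ‖∫ x, h x ∂μ‖ ≤ M * μ.real s := by
  rw [← setIntegral_eq_integral_of_forall_compl_eq_zero fun x hx =>
    Function.notMem_support.1 fun h' => hx (hsupp h')]
  exact norm_setIntegral_le_of_norm_le_const hs fun x _ => hM x

theorem exists_subset_closedBall_two_mul_div_dist {X : Type*} [MetricSpace X] {S : Set X}
    {p q : X} {r₁ r₂ : ℝ} (hpq : p ≠ q) (hS : S.Nonempty) (h₁ : S ⊆ closedBall p r₁)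
    (h₂ : S ⊆ closedBall q r₂) : ∃ z, S ⊆ closedBall z (2 * r₁ * r₂ / dist p q) := by
  obtain ⟨y, hy⟩ := hS
  have hD : 0 < dist p q := dist_pos.2 hpq
  have hp : dist y p ≤ r₁ := h₁ hy
  have hq : dist y q ≤ r₂ := h₂ hy
  have hsum : dist p q ≤ r₁ + r₂ := (dist_triangle_left p q y).trans (add_le_add hp hq)
  have hr₁ : 0 ≤ r₁ := dist_nonneg.trans hp
  have hr₂ : 0 ≤ r₂ := dist_nonneg.trans hq
  rcases le_total r₁ r₂ with hle | hle
  · refine ⟨p, h₁.trans (closedBall_subset_closedBall ?_)⟩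
    rw [le_div_iff₀ hD]
    nlinarith
  · refine ⟨q, h₂.trans (closedBall_subset_closedBall ?_)⟩
    rw [le_div_iff₀ hD]
    nlinarith

theorem Real.log_div_le_rpow_mul_rpow_neg {K t ε : ℝ} (hK : 0 ≤ K) (ht : 0 < t) (hε : 0 < ε) :
    Real.log (K / t) ≤ K ^ ε / ε * t ^ (-ε) := by
  calc Real.log (K / t) ≤ (K / t) ^ ε / ε := Real.log_le_rpow_div (by positivity) hε
    _ = K ^ ε / ε * t ^ (-ε) := by
      rw [Real.div_rpow hK ht.le, Real.rpow_neg ht.le]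
      ring

theorem mulHaar_norm_preimage_Icc {lo hi : ℝ} (hlo : 0 < lo) (hle : lo ≤ hi) :
    mulHaar (norm ⁻¹' Icc lo hi) = ENNReal.ofReal (2 * Real.pi * Real.log (hi / lo)) := by
  set A : Set ℂ := norm ⁻¹' Icc lo hi
  have hA : MeasurableSet A := measurableSet_Icc.preimage measurable_norm
  have hAc : IsCompact A := by
    refine (isCompact_closedBall (0 : ℂ) hi).of_isClosed_subset
      (isClosed_Icc.preimage continuous_norm) fun a ha => ?_
    simpa using ha.2
  have hint : IntegrableOn (fun a : ℂ => (‖a‖ ^ 2)⁻¹) A := by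
    refine ContinuousOn.integrableOn_compact hAc ((continuous_norm.pow 2).continuousOn.inv₀ ?_)
    exact fun a ha => pow_ne_zero 2 (hlo.trans_le ha.1).ne'
  rw [mulHaar, withDensity_apply _ hA, ← ofReal_integral_eq_lintegral_ofReal hint
    (ae_of_all _ fun a => by positivity)]
  congr 1
  have hradial :
      ∫ a in A, (‖a‖ ^ 2)⁻¹ = ∫ a : ℂ, (Icc lo hi).indicator (fun s => (s ^ 2)⁻¹) ‖a‖ := by
    rw [← integral_indicator hA]
    rfl
  have hIcc : Ioi (0 : ℝ) ∩ Icc lo hi = Icc lo hi :=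
    inter_eq_self_of_subset_right fun s hs => hlo.trans_le hs.1
  rw [hradial, integral_fun_norm_addHaar]
  have hIoi : ∫ s in Ioi (0 : ℝ), s ^ (2 - 1) * (Icc lo hi).indicator (fun s => (s ^ 2)⁻¹) s
      = Real.log (hi / lo) := by
    have hinv : EqOn (fun s : ℝ => s ^ (2 - 1) * (s ^ 2)⁻¹) (fun s => s⁻¹) (Icc lo hi) :=
      fun s hs => by field_simp [(hlo.trans_le hs.1).ne']; ring
    simp_rw [← indicator_mul_right (Icc lo hi) (fun s : ℝ => s ^ (2 - 1)),
      indicator_congr hinv]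
    rw [setIntegral_indicator measurableSet_Icc, hIcc, integral_Icc_eq_integral_Ioc,
      ← intervalIntegral.integral_of_le hle, integral_inv_of_pos hlo (hlo.trans_le hle)]
  simp only [Complex.finrank_real_complex, smul_eq_mul, hIoi, measureReal_def,
    Complex.volume_ball]
  norm_num
  ring

section Support

attribute [local instance] Matrix.seminormedAddCommGroup

theorem IsCompact.exists_pos_forall_norm_entry_le {m n α : Type*} [Fintype m] [Fintype n]
    [SeminormedAddCommGroup α] {K : Set (Matrix m n α)} (hK : IsCompact K) :
    ∃ R > 0, ∀ g ∈ K, ∀ i j, ‖g i j‖ ≤ R := by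
  obtain ⟨R, hR⟩ := hK.isBounded.exists_norm_le
  exact ⟨max R 1, by positivity, fun g hg i j =>
    (Matrix.norm_entry_le_entrywise_sup_norm g).trans ((hR g hg).trans (le_max_left R 1))⟩

end Support

noncomputable def orbitMat (a c x y : ℂ) : Matrix (Fin 2) (Fin 2) ℂ :=
  sMat a * zMat c * nMat x * w0Mat * nMat y

section Orbit

variable {f : Matrix (Fin 2) (Fin 2) ℂ → ℂ} {K : Set (Matrix (Fin 2) (Fin 2) ℂ)} {a c x y : ℂ}
  {M R δ : ℝ}

theorem orbitMat_eq (a c x y : ℂ) :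
    orbitMat a c x y = !![a * c * x, a * c * x * y + a * c; a⁻¹ * c, a⁻¹ * c * y] := by
  simp only [orbitMat, sMat, zMat, nMat, w0Mat, Matrix.mul_fin_two]
  norm_num

theorem det_orbitMat (ha : a ≠ 0) : (orbitMat a c x y).det = -c ^ 2 := by
  rw [orbitMat_eq, Matrix.det_fin_two_of]
  field_simp
  ring

theorem le_norm_of_orbitMat_mem (hδ : ∀ g ∈ K, δ ^ 2 ≤ ‖g.det‖) (ha : a ≠ 0)
    (hg : orbitMat a c x y ∈ K) : δ ≤ ‖c‖ := by
  have := hδ _ hg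
  rw [det_orbitMat ha, norm_neg, norm_pow] at this
  exact le_of_pow_le_pow_left₀ two_ne_zero (norm_nonneg c) this

theorem norm_mem_Icc_of_orbitMat_mem (hR : ∀ g ∈ K, ∀ i j, ‖g i j‖ ≤ R)
    (hδ : ∀ g ∈ K, δ ^ 2 ≤ ‖g.det‖) (hδ0 : 0 < δ) (ha : a ≠ 0) (hx : x ≠ 0)
    (hg : orbitMat a c x y ∈ K) : ‖a‖ ∈ Icc (δ / R) (R / (δ * ‖x‖)) := by
  have hc := le_norm_of_orbitMat_mem hδ ha hg
  have h00 := hR _ hg 0 0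
  have h10 := hR _ hg 1 0
  simp only [orbitMat_eq, Matrix.of_apply, Matrix.cons_val', Matrix.cons_val_zero,
    Matrix.cons_val_one, Matrix.empty_val', Matrix.cons_val_fin_one, norm_mul, norm_inv] at h00 h10
  have ha0 : 0 < ‖a‖ := norm_pos_iff.2 ha
  have hx0 : 0 < ‖x‖ := norm_pos_iff.2 hx
  have hca : ‖c‖ ≤ ‖a‖ * R := (inv_mul_le_iff₀ ha0).1 h10
  have hR0 : 0 < R := pos_of_mul_pos_right (hδ0.trans_le (hc.trans hca)) ha0.le
  constructor
  · rw [div_le_iff₀ hR0]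
    linarith
  · rw [le_div_iff₀ (by positivity)]
    nlinarith [mul_le_mul_of_nonneg_left hc (mul_nonneg ha0.le hx0.le)]

theorem mem_closedBall_of_orbitMat_mem (hR : ∀ g ∈ K, ∀ i j, ‖g i j‖ ≤ R) (ha : a ≠ 0)
    (hc : c ≠ 0) (hx : x ≠ 0) (hg : orbitMat a c x y ∈ K) :
    y ∈ closedBall 0 (R * ‖a‖ / ‖c‖) ∧ y ∈ closedBall (-x⁻¹) (R / (‖a‖ * ‖c‖ * ‖x‖)) := by
  have h01 := hR _ hg 0 1
  have h11 := hR _ hg 1 1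
  have hfactor : a * c * x * y + a * c = a * c * x * (y - -x⁻¹) := by field_simp; ring
  simp only [orbitMat_eq, Matrix.of_apply, Matrix.cons_val', Matrix.cons_val_zero,
    Matrix.cons_val_one, Matrix.empty_val', Matrix.cons_val_fin_one, hfactor, norm_mul,
    norm_inv] at h01 h11
  rw [mem_closedBall, mem_closedBall, dist_zero_right, dist_eq_norm,
    le_div_iff₀ (by positivity), le_div_iff₀ (by positivity)]
  constructor
  · rw [inv_mul_eq_div, div_mul_eq_mul_div, div_le_iff₀ (norm_pos_iff.2 ha)] at h11
    linarith
  · linarith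

theorem norm_integral_orbitMat_le (hM : ∀ g, ‖f g‖ ≤ M)
    (hR : ∀ g ∈ tsupport f, ∀ i j, ‖g i j‖ ≤ R)
    (hδ : ∀ g ∈ tsupport f, δ ^ 2 ≤ ‖g.det‖) (hδ0 : 0 < δ) (ha : a ≠ 0) (hx : x ≠ 0) :
    ‖∫ y, f (orbitMat a c x y)‖ ≤ M * (Real.pi * (2 * R ^ 2 / δ ^ 2) ^ 2) := by
  set S := Function.support fun y => f (orbitMat a c x y)
  have hM0 : 0 ≤ M := (norm_nonneg _).trans (hM 0)
  rcases S.eq_empty_or_nonempty with hS | hS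
  · rw [Function.support_eq_empty_iff.1 hS, integral_zero', norm_zero]
    positivity
  have hmem : ∀ y ∈ S, orbitMat a c x y ∈ tsupport f := fun y hy => subset_tsupport f hy
  obtain ⟨y₀, hy₀⟩ := hS
  have hcδ : δ ≤ ‖c‖ := le_norm_of_orbitMat_mem hδ ha (hmem _ hy₀)
  have hc : c ≠ 0 := norm_pos_iff.1 (hδ0.trans_le hcδ)
  have hball y (hy : y ∈ S) := mem_closedBall_of_orbitMat_mem hR ha hc hx (hmem y hy)
  obtain ⟨z, hz⟩ := exists_subset_closedBall_two_mul_div_dist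
    (neg_ne_zero.2 (inv_ne_zero hx)).symm ⟨y₀, hy₀⟩ (fun y hy => (hball y hy).1)
    (fun y hy => (hball y hy).2)
  have hrad : 2 * (R * ‖a‖ / ‖c‖) * (R / (‖a‖ * ‖c‖ * ‖x‖)) / dist 0 (-x⁻¹)
      ≤ 2 * R ^ 2 / δ ^ 2 := by
    have ha0 : ‖a‖ ≠ 0 := norm_ne_zero_iff.2 ha
    have hx0 : ‖x‖ ≠ 0 := norm_ne_zero_iff.2 hx
    calc _ = 2 * R ^ 2 / ‖c‖ ^ 2 := by
          rw [dist_zero_left, norm_neg, norm_inv]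
          field_simp
      _ ≤ 2 * R ^ 2 / δ ^ 2 := by gcongr
  have := norm_integral_le_of_support_subset (μ := volume) measure_closedBall_lt_top
    (hz.trans (closedBall_subset_closedBall hrad)) fun y => hM _
  rwa [measureReal_def, Complex.volume_closedBall, ENNReal.toReal_mul, ENNReal.toReal_pow,
    ENNReal.toReal_ofReal (by positivity), ENNReal.coe_toReal, NNReal.coe_real_pi,
    mul_comm (_ ^ 2)] at this

theorem norm_Morb_le (hM : ∀ g, ‖f g‖ ≤ M) (hR0 : 0 < R)
    (hR : ∀ g ∈ tsupport f, ∀ i j, ‖g i j‖ ≤ R) (hδ0 : 0 < δ)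
    (hδ : ∀ g ∈ tsupport f, δ ^ 2 ≤ ‖g.det‖) (hx : x ≠ 0) (hxr : ‖x‖ ≤ R ^ 2 / δ ^ 2) :
    ‖Morb f x c‖ ≤ M * (Real.pi * (2 * R ^ 2 / δ ^ 2) ^ 2) *
      (2 * Real.pi * Real.log (R ^ 2 / δ ^ 2 / ‖x‖)) := by
  have hx0 : 0 < ‖x‖ := norm_pos_iff.2 hx
  set A : Set ℂ := norm ⁻¹' Icc (δ / R) (R / (δ * ‖x‖))
  have hlo : 0 < δ / R := by positivity
  have hle : δ / R ≤ R / (δ * ‖x‖) := by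
    rw [div_le_div_iff₀ hR0 (by positivity)]
    rw [le_div_iff₀ (by positivity)] at hxr
    nlinarith
  have hratio : R / (δ * ‖x‖) / (δ / R) = R ^ 2 / δ ^ 2 / ‖x‖ := by
    field_simp
  have hA : A ⊆ {0}ᶜ := fun a ha (h0 : a = 0) => hlo.not_ge (by simpa [h0] using ha.1)
  have hvanish : ∀ a ∈ ({0}ᶜ : Set ℂ) \ A, ∫ y, f (orbitMat a c x y) = 0 := by
    rintro a ⟨ha, haA⟩
    refine integral_eq_zero_of_ae (ae_of_all _ fun y => ?_)
    by_contra hy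
    exact haA (norm_mem_Icc_of_orbitMat_mem hR hδ hδ0 ha hx (subset_tsupport f hy))
  have hmeas : mulHaar A = ENNReal.ofReal (2 * Real.pi * Real.log (R ^ 2 / δ ^ 2 / ‖x‖)) := by
    rw [mulHaar_norm_preimage_Icc hlo hle, hratio]
  have hlog : 0 ≤ Real.log (R ^ 2 / δ ^ 2 / ‖x‖) :=
    Real.log_nonneg ((one_le_div hx0).2 hxr)
  calc ‖Morb f x c‖ = ‖∫ a in A, (∫ y, f (orbitMat a c x y)) ∂mulHaar‖ := by
        change ‖∫ a in {0}ᶜ, (∫ y, f (orbitMat a c x y)) ∂mulHaar‖ = _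
        rw [setIntegral_eq_of_subset_of_forall_sdiff_eq_zero
          (measurableSet_singleton 0).compl hA hvanish]
    _ ≤ M * (Real.pi * (2 * R ^ 2 / δ ^ 2) ^ 2) * mulHaar.real A :=
        norm_setIntegral_le_of_norm_le_const (hmeas ▸ ENNReal.ofReal_lt_top :) fun a ha =>
          norm_integral_orbitMat_le (c := c) hM hR hδ hδ0 (hA ha) hx
    _ = _ := by rw [measureReal_def, hmeas, ENNReal.toReal_ofReal (by positivity)]

end Orbit

/-- **Growth of the `(A,N)` orbital integral.** For every `ε > 0` there are `C, r > 0` with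
`|M(x, c, f)| ≤ C |x|^{−ε}` for all `x, c ≠ 0` with `0 < |x| ≤ r`. -/
theorem AN_orbital_integral_growth (f : Matrix (Fin 2) (Fin 2) ℂ → ℂ)
    (hf : Continuous f) (hcs : HasCompactSupport f) (hGL : tsupport f ⊆ {g | g.det ≠ 0})
    (ε : ℝ) (hε : 0 < ε) :
    ∃ C > (0 : ℝ), ∃ r > (0 : ℝ), ∀ x c : ℂ, x ≠ 0 → c ≠ 0 → ‖x‖ ≤ r →
      ‖Morb f x c‖ ≤ C * ‖x‖ ^ (-ε) := by
  obtain ⟨M, hM0, hM⟩ : ∃ M > 0, ∀ g, ‖f g‖ ≤ M := by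
    obtain ⟨M, hM⟩ := hcs.exists_bound_of_continuous hf
    exact ⟨max M 1, by positivity, fun g => (hM g).trans (le_max_left M 1)⟩
  obtain ⟨R, hR0, hR⟩ := IsCompact.exists_pos_forall_norm_entry_le hcs
  obtain ⟨d, hd0, hd⟩ := hcs.exists_forall_le' (f := fun g => ‖g.det‖)
    (by fun_prop) fun g hg => norm_pos_iff.2 (show g.det ≠ 0 from hGL hg)
  have hδ : ∀ g ∈ tsupport f, √d ^ 2 ≤ ‖g.det‖ := by
    simpa only [Real.sq_sqrt hd0.le] using hd
  set K := R ^ 2 / √d ^ 2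
  refine ⟨M * (Real.pi * (2 * K) ^ 2) * (2 * Real.pi * (K ^ ε / ε)), by positivity,
    K, by positivity, fun x c hx _ hxr => ?_⟩
  calc ‖Morb f x c‖ ≤ M * (Real.pi * (2 * K) ^ 2) * (2 * Real.pi * Real.log (K / ‖x‖)) := by
        simpa only [mul_div_assoc] using
          norm_Morb_le hM hR0 hR (Real.sqrt_pos.2 hd0) hδ hx hxr
    _ ≤ M * (Real.pi * (2 * K) ^ 2) * (2 * Real.pi * (K ^ ε / ε * ‖x‖ ^ (-ε))) := by
        gcongr
        exact Real.log_div_le_rpow_mul_rpow_neg (by positivity) (norm_pos_iff.2 hx) hε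
    _ = _ := by ring
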